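/- Continuation argument for the quadratic a priori inequality (core of Proposition 3.2 and condition (K)): Let A > 0, Φ₀ > 0, and K ≥ 0 with K ≤ 1/(4A(Φ₀ + 1)). Let ξ : [0,∞) → ℝ be continuous with ξ(T) ≥ 0 for all T, ξ(0) = 0, and ξ(T) ≤ A · K · ξ(T)² + Φ₀ for all T ≥ 0. Then ξ(T) < 2Φ₀ for all T ≥ 0. -/
import Mathlib


open Set

/-- **Continuation argument for the quadratic a priori inequality** (core of Proposition 3.2
and condition (K)): if `A > 0`, `Φ₀ > 0`, `0 ≤ K ≤ 1/(4A(Φ₀+1))`, and `ξ : [0,∞) → ℝ` is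
continuous, nonnegative, vanishes at `0`, and satisfies `ξ(T) ≤ A K ξ(T)² + Φ₀` for all
`T ≥ 0`, then `ξ(T) < 2Φ₀` for all `T ≥ 0`. -/
theorem continuation_argument
    (A Φ₀ K : ℝ) (hA : 0 < A) (hΦ : 0 < Φ₀) (hK0 : 0 ≤ K)
    (hK : K ≤ 1 / (4 * A * (Φ₀ + 1)))
    (ξ : ℝ → ℝ) (hcont : ContinuousOn ξ (Ici 0))
    (hnonneg : ∀ T : ℝ, 0 ≤ T → 0 ≤ ξ T) (h0 : ξ 0 = 0)
    (hineq : ∀ T : ℝ, 0 ≤ T → ξ T ≤ A * K * ξ T ^ 2 + Φ₀) :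
    ∀ T : ℝ, 0 ≤ T → ξ T < 2 * Φ₀ := by
  by_contra h
  push_neg at h
  obtain ⟨T, hT, hTge⟩ := h
  have hiv := intermediate_value_Icc hT (hcont.mono (Icc_subset_Ici_self))
  have hmem : (2 * Φ₀) ∈ Icc (ξ 0) (ξ T) := by
    constructor <;> [rw [h0]; skip] <;> linarith
  obtain ⟨t, ht, hξt⟩ := hiv hmem
  have hAK : A * K ≤ 1 / (4 * (Φ₀ + 1)) := by
    rw [le_div_iff₀ (by positivity)] at hK ⊢
    nlinarith
  have h1 := hineq t ht.1
  rw [hξt] at h1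
  have hpos : 0 < 4 * (Φ₀ + 1) := by positivity
  rw [le_div_iff₀ hpos] at hAK
  nlinarith
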